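/- arXiv:1806.11543 — 9 statements merged into one kernel-verified Lean document; each statement's English description precedes it below -/
import Mathlib

section
/- Let X be a normed space, P an m-homogeneous continuous polynomial with m ≥ 2 and ‖P‖ > 0, and r_P = ‖P‖^{1/(1-m)}. If ‖y‖ < r_P, then the iterates P^n(y) converge to 0; in fact ‖P^n(y)‖ ≤ (‖y‖/r_P)^{m^n} · r_P. -/
/-!
With `r = C ^ (1 / (1 - m))` one has `C * r ^ m = r`, so the estimate `‖P x‖ ≤ C * ‖x‖ ^ m`
reads `‖P x‖ / r ≤ (‖x‖ / r) ^ m`. Iterating, `‖P^[n] y‖ / r ≤ (‖y‖ / r) ^ (m ^ n)`, which tends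
to `0` when `‖y‖ < r` and `m ≥ 2`.
-/

open Filter Topology

lemma Real.mul_rpow_one_div_one_sub_pow {C : ℝ} (hC : 0 < C) {m : ℕ} (hm : m ≠ 1) :
    C * (C ^ ((1 : ℝ) / (1 - (m : ℝ)))) ^ m = C ^ ((1 : ℝ) / (1 - (m : ℝ))) := by
  have h1m : (1 : ℝ) - m ≠ 0 := sub_ne_zero.2 (by exact_mod_cast hm.symm)
  rw [← Real.rpow_natCast, ← Real.rpow_mul hC.le]
  nth_rewrite 1 [← Real.rpow_one C]
  rw [← Real.rpow_add hC]
  congr 1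
  field_simp
  ring

lemma norm_iterate_le_of_norm_le_mul_norm_pow {X : Type*} [SeminormedAddGroup X] {f : X → X}
    {C r : ℝ} {m : ℕ} (hC : 0 ≤ C) (hf : ∀ x, ‖f x‖ ≤ C * ‖x‖ ^ m) (hr : r ≠ 0)
    (hCr : C * r ^ m = r) (y : X) (n : ℕ) :
    ‖f^[n] y‖ ≤ (‖y‖ / r) ^ (m ^ n) * r := by
  induction n with
  | zero => simp [div_mul_cancel₀ _ hr]
  | succ n ih =>
    rw [Function.iterate_succ_apply']
    calc ‖f (f^[n] y)‖ ≤ C * ‖f^[n] y‖ ^ m := hf _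
      _ ≤ C * ((‖y‖ / r) ^ (m ^ n) * r) ^ m := by gcongr
      _ = (‖y‖ / r) ^ (m ^ (n + 1)) * (C * r ^ m) := by
        rw [mul_pow, ← pow_mul, pow_succ]
        ring
      _ = (‖y‖ / r) ^ (m ^ (n + 1)) * r := by rw [hCr]

lemma tendsto_pow_pow_atTop_nhds_zero {q : ℝ} (hq₀ : 0 ≤ q) (hq₁ : q < 1) {m : ℕ} (hm : 1 < m) :
    Tendsto (fun n : ℕ => q ^ (m ^ n)) atTop (𝓝 0) :=
  (tendsto_pow_atTop_nhds_zero_of_lt_one hq₀ hq₁).comp (tendsto_pow_atTop_atTop_of_one_lt hm)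

theorem orbit_in_limit_ball_tendsto_zero_general {X : Type*} [NormedAddCommGroup X]
    (P : X → X) (m : ℕ) (hm : 2 ≤ m)
    (C : ℝ) (hC : 0 < C)
    (hbound : ∀ x : X, ‖P x‖ ≤ C * ‖x‖ ^ m)
    (y : X) (hy : ‖y‖ < C ^ ((1 : ℝ) / (1 - (m : ℝ)))) :
    Tendsto (fun n => P^[n] y) atTop (nhds 0) ∧
      ∀ n : ℕ, ‖P^[n] y‖ ≤
        (‖y‖ / C ^ ((1 : ℝ) / (1 - (m : ℝ)))) ^ (m ^ n) * C ^ ((1 : ℝ) / (1 - (m : ℝ))) := by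
  set r : ℝ := C ^ ((1 : ℝ) / (1 - (m : ℝ)))
  have hr : 0 < r := Real.rpow_pos_of_pos hC _
  have orbit_bound := norm_iterate_le_of_norm_le_mul_norm_pow hC.le hbound hr.ne'
    (Real.mul_rpow_one_div_one_sub_pow hC (by omega)) y
  refine ⟨squeeze_zero_norm orbit_bound ?_, orbit_bound⟩
  simpa using (tendsto_pow_pow_atTop_nhds_zero (by positivity) ((div_lt_one hr).2 hy)
    (by omega : 1 < m)).mul_const r

/-- If `‖y‖ < r_P = ‖P‖^(1/(1-m))` then the iterates `P^[n] y` converge to `0`,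
and in fact `‖P^[n] y‖ ≤ (‖y‖ / r_P) ^ (m ^ n) * r_P`.  Here `C` plays the role of
`‖P‖ = sup_{‖x‖ ≤ 1} ‖P x‖`. -/
theorem orbit_in_limit_ball_tendsto_zero {X : Type*} [NormedAddCommGroup X] [NormedSpace ℂ X]
    (P : X → X) (m : ℕ) (hm : 2 ≤ m)
    (hhom : ∀ (c : ℂ) (x : X), P (c • x) = c ^ m • P x)
    (C : ℝ) (hC : 0 < C)
    (hbound : ∀ x : X, ‖P x‖ ≤ C * ‖x‖ ^ m)
    (hsup : ∀ ε > (0 : ℝ), ∃ x : X, ‖x‖ ≤ 1 ∧ C - ε < ‖P x‖)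
    (y : X) (hy : ‖y‖ < C ^ ((1 : ℝ) / (1 - (m : ℝ)))) :
    Tendsto (fun n => P^[n] y) atTop (nhds 0) ∧
      ∀ n : ℕ, ‖P^[n] y‖ ≤
        (‖y‖ / C ^ ((1 : ℝ) / (1 - (m : ℝ)))) ^ (m ^ n) * C ^ ((1 : ℝ) / (1 - (m : ℝ))) :=
  orbit_in_limit_ball_tendsto_zero_general P m hm C hC hbound y hy
end

section
/- No continuous m-homogeneous polynomial with m ≥ 2 on a nonzero normed space can be hypercyclic, i.e., there is no x ∈ X whose orbit {P^n(x) : n ∈ ℕ} is dense in X. -/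
open Filter

/-- No continuous `m`-homogeneous polynomial with `m ≥ 2` on a nonzero normed
space is hypercyclic: there is no point whose orbit `{P^[n] x : n ∈ ℕ}` is dense. -/
theorem no_hypercyclic_homogeneous_polynomial {X : Type*} [NormedAddCommGroup X]
    [NormedSpace ℂ X] [Nontrivial X]
    (P : X → X) (m : ℕ) (hm : 2 ≤ m) (hcont : Continuous P)
    (hhom : ∀ (c : ℂ) (x : X), P (c • x) = c ^ m • P x)
    (C : ℝ) (hbound : ∀ x : X, ‖P x‖ ≤ C * ‖x‖ ^ m) :
    ¬ ∃ x : X, Dense (Set.range fun n : ℕ => P^[n] x) := by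
  rintro ⟨x, hx⟩
  set C' : ℝ := max C 1 with hC'def
  have hC1 : (1 : ℝ) ≤ C' := le_max_right _ _
  have hC0 : 0 < C' := lt_of_lt_of_le one_pos hC1
  set δ : ℝ := C'⁻¹ with hδdef
  have hδ0 : 0 < δ := inv_pos.2 hC0
  have hδ1 : δ ≤ 1 := inv_le_one_of_one_le₀ hC1
  -- contraction step
  have step : ∀ y : X, ‖y‖ ≤ δ → ‖P y‖ ≤ δ := by
    intro y hy
    have h1 : ‖P y‖ ≤ C' * ‖y‖ ^ m :=
      (hbound y).trans (mul_le_mul_of_nonneg_right (le_max_left _ _)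
        (pow_nonneg (norm_nonneg _) _))
    have hmm : m = (m - 1) + 1 := by omega
    have h2 : ‖y‖ ^ m ≤ δ ^ (m - 1) * ‖y‖ := by
      rw [hmm, pow_succ]
      exact mul_le_mul_of_nonneg_right (pow_le_pow_left₀ (norm_nonneg _) hy _) (norm_nonneg _)
    have h3 : δ ^ (m - 1) ≤ δ := by
      calc δ ^ (m - 1) ≤ δ ^ 1 := pow_le_pow_of_le_one hδ0.le hδ1 (by omega)
        _ = δ := pow_one δ
    have h4 : C' * δ = 1 := mul_inv_cancel₀ hC0.ne'
    calc ‖P y‖ ≤ C' * (δ ^ (m - 1) * ‖y‖) := h1.trans (by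
          exact mul_le_mul_of_nonneg_left h2 hC0.le)
      _ ≤ C' * (δ * ‖y‖) := by
          exact mul_le_mul_of_nonneg_left (mul_le_mul_of_nonneg_right h3 (norm_nonneg _)) hC0.le
      _ = ‖y‖ := by rw [← mul_assoc, h4, one_mul]
      _ ≤ δ := hy
  -- some iterate is small
  obtain ⟨z, ⟨k, hk⟩, hz⟩ := hx.exists_dist_lt (0 : X) hδ0
  have hkx : ‖P^[k] x‖ ≤ δ := by
    have hk' : P^[k] x = z := hk
    rw [hk']
    rw [dist_comm, dist_zero_right] at hz
    exact hz.le
  have tail : ∀ n : ℕ, ‖P^[k + n] x‖ ≤ δ := by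
    intro n
    induction n with
    | zero => simpa using hkx
    | succ n ih =>
      have : k + (n + 1) = (k + n) + 1 := by omega
      rw [this, Function.iterate_succ_apply']
      exact step _ ih
  have tail' : ∀ n : ℕ, k ≤ n → ‖P^[n] x‖ ≤ δ := by
    intro n hn
    have : n = k + (n - k) := by omega
    rw [this]; exact tail _
  -- a unit vector
  obtain ⟨v, hv⟩ := exists_ne (0 : X)
  set u : X := ‖v‖⁻¹ • v with hudef
  have hu : ‖u‖ = 1 := norm_smul_inv_norm hv
  have hu0 : u ≠ 0 := by
    intro h; rw [h, norm_zero] at hu; exact one_ne_zero hu.symm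
  -- the finite head of the orbit
  set F : Set X := (fun n => P^[n] x) '' Set.Iio k with hFdef
  have hF : F.Finite := (Set.finite_Iio k).image _
  have key : ∀ t : ℝ, t ∈ Set.Icc (2 * δ) (3 * δ) → (t • u) ∈ F := by
    intro t ht
    have hnorm : ‖t • u‖ = t := by
      rw [norm_smul, hu, mul_one, Real.norm_eq_abs, abs_of_nonneg]
      linarith [ht.1]
    rw [← hF.isClosed.closure_eq]
    rw [Metric.mem_closure_iff]
    intro ε hε
    obtain ⟨z, ⟨n, hn⟩, hzd⟩ := hx.exists_dist_lt (t • u) (lt_min hε hδ0)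
    have hzδ : dist (t • u) z < δ := hzd.trans_le (min_le_right _ _)
    have hzn : δ < ‖z‖ := by
      have h1 : ‖t • u‖ - ‖z‖ ≤ dist (t • u) z := by
        rw [dist_eq_norm]; exact norm_sub_norm_le _ _
      have : 2 * δ ≤ t := ht.1
      rw [hnorm] at h1
      linarith
    have hnk : n < k := by
      by_contra h
      push_neg at h
      have hn' : P^[n] x = z := hn
      have := tail' n h
      rw [hn'] at this
      exact absurd this (not_le.2 hzn)
    exact ⟨z, ⟨n, hnk, hn⟩, hzd.trans_le (min_le_left _ _)⟩
  -- contradiction: infinite interval injects into finite set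
  have hinj : Set.InjOn (fun t : ℝ => t • u) (Set.Icc (2 * δ) (3 * δ)) :=
    fun a _ b _ h => smul_left_injective ℝ hu0 h
  have hlt : 2 * δ < 3 * δ := by linarith
  have hinf : ((fun t : ℝ => t • u) '' Set.Icc (2 * δ) (3 * δ)).Infinite :=
    (Set.Icc_infinite hlt).image hinj
  exact hinf (hF.subset (Set.image_subset_iff.2 key))
end

section
/- Let P be an m-homogeneous polynomial (m ≥ 2) on a normed space X with ‖P‖ > 0, let A_P = {x : P^n(x) → 0} and J_P = ∂A_P. If x ∉ J_P, then either ‖P^n(x)‖ → ∞ or P^n(x) → 0. -/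
/-!
Near `0` the bound `‖P z‖ ≤ C ‖z‖ ^ m` with `m ≥ 2` makes `P` a contraction, so a small
ball lies in the basin `A` of `0`. If the orbit of `x` does not escape to infinity, it stays
bounded by some `M` along a subsequence, and by homogeneity
`P^[n] (t • x) = t ^ (m ^ n) • P^[n] x` lands in that ball for some `n` whenever `|t| < 1`;
hence `t • x ∈ A` and, letting `t → 1`, `x ∈ closure A`. Off the frontier this forces
`x ∈ interior A ⊆ A`.
-/

open Filter Topology Metric

def attractionBasin {X : Type*} [TopologicalSpace X] [Zero X] (P : X → X) : Set X :=
  {y | Tendsto (fun n => P^[n] y) atTop (𝓝 0)}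

lemma mem_attractionBasin_of_iterate_mem {X : Type*} [TopologicalSpace X] [Zero X]
    {P : X → X} {y : X} (n : ℕ) (h : P^[n] y ∈ attractionBasin P) :
    y ∈ attractionBasin P := by
  refine (tendsto_add_atTop_iff_nat n).mp ?_
  simpa only [attractionBasin, Set.mem_ofPred_eq, ← Function.iterate_add_apply] using h

lemma iterate_smul_of_homogeneous {M X : Type*} [Monoid M] [MulAction M X] {P : X → X} {m : ℕ}
    (hhom : ∀ (c : M) (x : X), P (c • x) = c ^ m • P x) (c : M) (x : X) (n : ℕ) :
    P^[n] (c • x) = c ^ (m ^ n) • P^[n] x := by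
  induction n with
  | zero => simp
  | succ n ih =>
    rw [Function.iterate_succ_apply', Function.iterate_succ_apply', ih, hhom, ← pow_mul,
      ← pow_succ]

section Contraction

variable {X : Type*} [SeminormedAddCommGroup X] {P : X → X}

lemma tendsto_iterate_nhds_zero_of_contracting {r q : ℝ} (hq₀ : 0 ≤ q) (hq : q < 1)
    (hP : ∀ z, ‖z‖ ≤ r → ‖P z‖ ≤ q * ‖z‖) {y : X} (hy : ‖y‖ ≤ r) :
    Tendsto (fun n => P^[n] y) atTop (𝓝 0) := by
  have hmaps : Set.MapsTo P (closedBall 0 r) (closedBall 0 r) := fun z hz => by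
    rw [mem_closedBall_zero_iff] at hz ⊢
    calc ‖P z‖ ≤ q * ‖z‖ := hP z hz
      _ ≤ 1 * r := mul_le_mul hq.le hz (norm_nonneg _) zero_le_one
      _ = r := one_mul r
  have hgeom (n : ℕ) : ‖P^[n] y‖ ≤ q ^ n * ‖y‖ :=
    le_geom (u := fun k => ‖P^[k] y‖) hq₀ n fun k _ => by
      rw [Function.iterate_succ_apply']
      exact hP _ (mem_closedBall_zero_iff.mp (hmaps.iterate k (mem_closedBall_zero_iff.mpr hy)))
  rw [tendsto_zero_iff_norm_tendsto_zero]
  refine squeeze_zero (fun n => norm_nonneg _) hgeom ?_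
  simpa using (tendsto_pow_atTop_nhds_zero_of_lt_one hq₀ hq).mul_const ‖y‖

variable {m : ℕ} {C : ℝ}

lemma norm_apply_le_mul_norm_of_norm_le (hC : 0 ≤ C) (hm : 1 ≤ m)
    (hbound : ∀ x : X, ‖P x‖ ≤ C * ‖x‖ ^ m) {r : ℝ} {z : X} (hz : ‖z‖ ≤ r) :
    ‖P z‖ ≤ C * r ^ (m - 1) * ‖z‖ :=
  calc ‖P z‖ ≤ C * ‖z‖ ^ m := hbound z
    _ = C * ‖z‖ ^ (m - 1) * ‖z‖ := by rw [mul_assoc, ← pow_succ, Nat.sub_add_cancel hm]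
    _ ≤ C * r ^ (m - 1) * ‖z‖ := by gcongr

lemma exists_ball_subset_attractionBasin (hC : 0 ≤ C) (hm : 2 ≤ m)
    (hbound : ∀ x : X, ‖P x‖ ≤ C * ‖x‖ ^ m) :
    ∃ δ > 0, ball (0 : X) δ ⊆ attractionBasin P := by
  have hsmall : ∀ᶠ r in 𝓝[>] (0 : ℝ), C * r ^ (m - 1) < 1 := by
    have hlim : Tendsto (fun r : ℝ => C * r ^ (m - 1)) (𝓝 0) (𝓝 0) := by
      simpa [zero_pow (show m - 1 ≠ 0 by omega)] using
        ((continuous_pow (m - 1)).const_mul C).tendsto (0 : ℝ)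
    exact nhdsWithin_le_nhds (hlim.eventually (gt_mem_nhds one_pos))
  obtain ⟨δ, hδ, hδpos⟩ := (hsmall.and self_mem_nhdsWithin).exists
  refine ⟨δ, hδpos, fun y hy => ?_⟩
  exact tendsto_iterate_nhds_zero_of_contracting (by positivity) hδ
    (fun z hz => norm_apply_le_mul_norm_of_norm_le hC (by omega) hbound hz)
    (mem_ball_zero_iff.mp hy).le

end Contraction

section Homogeneous

variable {𝕜 X : Type*} [RCLike 𝕜] [SeminormedAddCommGroup X] [NormedSpace 𝕜 X]
  {P : X → X} {m : ℕ} {C : ℝ}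

lemma smul_mem_attractionBasin_of_frequently_norm_iterate_lt (hm : 2 ≤ m)
    (hhom : ∀ (c : 𝕜) (x : X), P (c • x) = c ^ m • P x) (hC : 0 ≤ C)
    (hbound : ∀ x : X, ‖P x‖ ≤ C * ‖x‖ ^ m) {x : X} {M : ℝ}
    (hM : ∃ᶠ n in atTop, ‖P^[n] x‖ < M) {c : 𝕜} (hc : ‖c‖ < 1) :
    c • x ∈ attractionBasin P := by
  obtain ⟨δ, hδ, hball⟩ := exists_ball_subset_attractionBasin hC hm hbound
  have hpow : Tendsto (fun n => ‖c‖ ^ (m ^ n) * M) atTop (𝓝 0) := by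
    simpa using ((tendsto_pow_atTop_nhds_zero_of_lt_one (norm_nonneg c) hc).comp
      (tendsto_pow_atTop_atTop_of_one_lt (show 1 < m by omega))).mul_const M
  obtain ⟨n, hnM, hnδ⟩ := (hM.and_eventually (hpow.eventually (gt_mem_nhds hδ))).exists
  refine mem_attractionBasin_of_iterate_mem n (hball ?_)
  rw [mem_ball_zero_iff, iterate_smul_of_homogeneous hhom, norm_smul, norm_pow]
  calc ‖c‖ ^ (m ^ n) * ‖P^[n] x‖ ≤ ‖c‖ ^ (m ^ n) * M := by gcongr
    _ < δ := hnδ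

lemma mem_closure_attractionBasin_of_not_tendsto_atTop (hm : 2 ≤ m)
    (hhom : ∀ (c : 𝕜) (x : X), P (c • x) = c ^ m • P x) (hC : 0 ≤ C)
    (hbound : ∀ x : X, ‖P x‖ ≤ C * ‖x‖ ^ m) {x : X}
    (h : ¬Tendsto (fun n => ‖P^[n] x‖) atTop atTop) : x ∈ closure (attractionBasin P) := by
  obtain ⟨M, hM⟩ : ∃ M, ∃ᶠ n in atTop, ‖P^[n] x‖ < M := by
    simpa only [Filter.tendsto_atTop, not_forall, not_eventually, not_le] using h
  have hlim : Tendsto (fun t : ℝ => (t : 𝕜) • x) (𝓝[<] 1) (𝓝 x) := by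
    have hcont : Continuous fun t : ℝ => (t : 𝕜) • x :=
      RCLike.continuous_ofReal.smul continuous_const
    simpa using (hcont.tendsto 1).mono_left nhdsWithin_le_nhds
  refine mem_closure_of_tendsto hlim ?_
  filter_upwards [Ioo_mem_nhdsLT zero_lt_one] with t ht
  refine smul_mem_attractionBasin_of_frequently_norm_iterate_lt hm hhom hC hbound hM ?_
  rw [RCLike.norm_ofReal, abs_of_pos ht.1]
  exact ht.2

end Homogeneous

theorem not_in_julia_dichotomy_general {X : Type*} [NormedAddCommGroup X] [NormedSpace ℂ X]
    (P : X → X) (m : ℕ) (hm : 2 ≤ m)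
    (hhom : ∀ (c : ℂ) (x : X), P (c • x) = c ^ m • P x)
    (C : ℝ) (hC : 0 < C)
    (hbound : ∀ x : X, ‖P x‖ ≤ C * ‖x‖ ^ m)
    (x : X)
    (hx : x ∉ frontier {y : X | Tendsto (fun n => P^[n] y) atTop (nhds 0)}) :
    Tendsto (fun n => ‖P^[n] x‖) atTop atTop ∨
      Tendsto (fun n => P^[n] x) atTop (nhds 0) := by
  refine or_iff_not_imp_left.mpr fun hesc => ?_
  have hcl : x ∈ closure (attractionBasin P) :=
    mem_closure_attractionBasin_of_not_tendsto_atTop hm hhom hC.le hbound hesc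
  exact interior_subset (of_not_not fun hint => hx ⟨hcl, hint⟩)

/-- Let `A_P = {x | P^[n] x → 0}` and `J_P = frontier A_P` (the Julia set).
If `x ∉ J_P` then either `‖P^[n] x‖ → ∞` or `P^[n] x → 0`. -/
theorem not_in_julia_dichotomy {X : Type*} [NormedAddCommGroup X] [NormedSpace ℂ X]
    (P : X → X) (m : ℕ) (hm : 2 ≤ m)
    (hhom : ∀ (c : ℂ) (x : X), P (c • x) = c ^ m • P x)
    (C : ℝ) (hC : 0 < C)
    (hbound : ∀ x : X, ‖P x‖ ≤ C * ‖x‖ ^ m)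
    (hsup : ∀ ε > (0 : ℝ), ∃ x : X, ‖x‖ ≤ 1 ∧ C - ε < ‖P x‖)
    (x : X)
    (hx : x ∉ frontier {y : X | Tendsto (fun n => P^[n] y) atTop (nhds 0)}) :
    Tendsto (fun n => ‖P^[n] x‖) atTop atTop ∨
      Tendsto (fun n => P^[n] x) atTop (nhds 0) :=
  not_in_julia_dichotomy_general P m hm hhom C hC hbound x hx
end

section
/- Let P be an m-homogeneous polynomial (m ≥ 2) on a normed space with ‖P‖ > 0. Then A_{P∘P...} stabilizes for iterates: A_{P^k} = A_P for every k ≥ 1, and consequently J_{P^k} = J_P. -/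
open Filter

/-- Inside the ball of radius `min 1 C⁻¹` one has `C ‖y‖ ^ m ≤ C ‖y‖ ^ (m - 1) ‖y‖ ≤ ‖y‖`;
this is the invariant limit ball. -/
lemma norm_apply_le_self_of_norm_le {X : Type*} [SeminormedAddCommGroup X]
    (P : X → X) (m : ℕ) (hm : 2 ≤ m) (C : ℝ) (hC : 0 < C)
    (hbound : ∀ x : X, ‖P x‖ ≤ C * ‖x‖ ^ m)
    {y : X} (hy : ‖y‖ ≤ min 1 C⁻¹) : ‖P y‖ ≤ ‖y‖ := by
  have hy_one : ‖y‖ ^ (m - 1) ≤ ‖y‖ :=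
    pow_le_of_le_one (norm_nonneg _) (hy.trans (min_le_left _ _)) (by omega)
  calc ‖P y‖ ≤ C * ‖y‖ ^ m := hbound y
    _ = C * (‖y‖ ^ (m - 1) * ‖y‖) := by rw [← pow_succ, Nat.sub_add_cancel (by omega)]
    _ ≤ C * (C⁻¹ * ‖y‖) := by
        gcongr
        exact hy_one.trans (hy.trans (min_le_right _ _))
    _ = ‖y‖ := by field_simp

section NonexpandingNearZero

variable {X : Type*} [SeminormedAddCommGroup X] {f : X → X} {r : ℝ}

lemma norm_iterate_le_self_of_norm_le (hf : ∀ y, ‖y‖ ≤ r → ‖f y‖ ≤ ‖y‖)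
    {y : X} (hy : ‖y‖ ≤ r) (j : ℕ) : ‖f^[j] y‖ ≤ ‖y‖ := by
  induction j with
  | zero => rfl
  | succ j ih =>
    rw [Function.iterate_succ_apply']
    exact (hf _ (ih.trans hy)).trans ih

/-- Once the orbit enters the ball of radius `r` it stays in it and its norm never increases,
so convergence to `0` along the subsequence `k * n` forces convergence of the whole orbit. -/
theorem tendsto_iterate_iterate_iff (hr : 0 < r) (hf : ∀ y, ‖y‖ ≤ r → ‖f y‖ ≤ ‖y‖)
    {k : ℕ} (hk : 1 ≤ k) (x : X) :
    Tendsto (fun n => (f^[k])^[n] x) atTop (nhds 0) ↔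
      Tendsto (fun n => f^[n] x) atTop (nhds 0) := by
  simp only [← Function.iterate_mul]
  constructor
  · intro hsub
    rw [NormedAddGroup.tendsto_nhds_zero] at hsub ⊢
    intro ε hε
    obtain ⟨N, hN⟩ := (hsub (min r ε) (lt_min hr hε)).exists
    filter_upwards [eventually_ge_atTop (k * N)] with n hn
    obtain ⟨j, rfl⟩ := Nat.exists_eq_add_of_le hn
    rw [add_comm, Function.iterate_add_apply]
    calc ‖f^[j] (f^[k * N] x)‖ ≤ ‖f^[k * N] x‖ :=
          norm_iterate_le_self_of_norm_le hf (hN.le.trans (min_le_left _ _)) j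
      _ < ε := hN.trans_le (min_le_right _ _)
  · intro h
    exact h.comp (tendsto_id.const_mul_atTop' hk)

end NonexpandingNearZero

theorem basin_and_julia_of_iterate_general {X : Type*} [NormedAddCommGroup X]
    (P : X → X) (m : ℕ) (hm : 2 ≤ m)
    (C : ℝ) (hC : 0 < C)
    (hbound : ∀ x : X, ‖P x‖ ≤ C * ‖x‖ ^ m)
    (k : ℕ) (hk : 1 ≤ k) :
    {x : X | Tendsto (fun n => (P^[k])^[n] x) atTop (nhds 0)} =
        {x : X | Tendsto (fun n => P^[n] x) atTop (nhds 0)} ∧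
      frontier {x : X | Tendsto (fun n => (P^[k])^[n] x) atTop (nhds 0)} =
        frontier {x : X | Tendsto (fun n => P^[n] x) atTop (nhds 0)} := by
  have hbasin : {x : X | Tendsto (fun n => (P^[k])^[n] x) atTop (nhds 0)} =
      {x : X | Tendsto (fun n => P^[n] x) atTop (nhds 0)} :=
    Set.ext <| tendsto_iterate_iterate_iff (lt_min one_pos (inv_pos.mpr hC))
      (fun _ hy => norm_apply_le_self_of_norm_le P m hm C hC hbound hy) hk
  exact ⟨hbasin, by rw [hbasin]⟩

/-- For every `k ≥ 1`, the basin of attraction of `0` for the iterate `P^[k]`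
coincides with the one for `P`, and consequently the Julia sets coincide:
`A_{P^k} = A_P` and `J_{P^k} = J_P`. -/
theorem basin_and_julia_of_iterate {X : Type*} [NormedAddCommGroup X] [NormedSpace ℂ X]
    (P : X → X) (m : ℕ) (hm : 2 ≤ m)
    (hhom : ∀ (c : ℂ) (x : X), P (c • x) = c ^ m • P x)
    (C : ℝ) (hC : 0 < C)
    (hbound : ∀ x : X, ‖P x‖ ≤ C * ‖x‖ ^ m)
    (hsup : ∀ ε > (0 : ℝ), ∃ x : X, ‖x‖ ≤ 1 ∧ C - ε < ‖P x‖)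
    (k : ℕ) (hk : 1 ≤ k) :
    {x : X | Tendsto (fun n => (P^[k])^[n] x) atTop (nhds 0)} =
        {x : X | Tendsto (fun n => P^[n] x) atTop (nhds 0)} ∧
      frontier {x : X | Tendsto (fun n => (P^[k])^[n] x) atTop (nhds 0)} =
        frontier {x : X | Tendsto (fun n => P^[n] x) atTop (nhds 0)} :=
  basin_and_julia_of_iterate_general P m hm C hC hbound k hk
end

section
/- Consider the space c of convergent complex sequences with the sup norm and the m-homogeneous polynomial P defined by P(a)_j = (a_{j+1})^m for m ≥ 2. If a = (a_j) ∈ c with |lim_j a_j| < 1, then P^n(a) → 0; and if |lim_j a_j| > 1, then every point in some neighborhood of a has ‖P^n(·)‖_∞ → ∞. Consequently J_P = {a ∈ c : |lim_j a_j| = 1}. -/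
/-!
Coordinatewise, `P^[n] a` is the sequence `j ↦ a_{j+n} ^ (m ^ n)`. If `|lim a| < 1`, the tail
of `a` eventually lies in a disc of radius `r < 1`, so `‖P^[n] a‖ ≤ r ^ (m ^ n) → 0`.
Conversely the limit of `P^[n] a` is `(lim a) ^ (m ^ n)`, which bounds `‖P^[n] a‖` from below
and forces escape to `∞` once `|lim a| > 1`. Hence `A_P` is the preimage of the open unit disc
under the limit functional `lim : c → ℂ`, which is continuous and open (it has continuous
sections `z ↦ a + (z - lim a) • 1`), so `∂A_P` is the preimage of the unit circle.
-/

open Filter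

/-- The Banach space `c` of convergent (complex) sequences, realized as the subspace of
convergent elements of `ℓ∞` (bounded sequences with the sup norm). -/
def ConvergentSeq : Set (BoundedContinuousFunction ℕ ℂ) :=
  {f | ∃ L : ℂ, Tendsto (fun j => f j) atTop (nhds L)}

open Topology Metric
open scoped BoundedContinuousFunction

theorem BoundedContinuousFunction.norm_le_norm_of_tendsto {α E : Type*} [TopologicalSpace α]
    [SeminormedAddCommGroup E] {l : Filter α} [l.NeBot] (f : α →ᵇ E)
    {L : E} (h : Tendsto f l (𝓝 L)) : ‖L‖ ≤ ‖f‖ :=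
  le_of_tendsto h.norm (Eventually.of_forall f.norm_coe_le_norm)

theorem iterate_apply_eq_pow_of_apply_eq_pow_succ {X M : Type*} [Monoid M] {m : ℕ} {P : X → X}
    {φ : X → ℕ → M} (hP : ∀ x j, φ (P x) j = φ x (j + 1) ^ m) (x : X) (n j : ℕ) :
    φ (P^[n] x) j = φ x (j + n) ^ (m ^ n) := by
  induction n generalizing j with
  | zero => simp
  | succ n ih =>
    rw [Function.iterate_succ_apply', hP, ih, ← pow_mul, ← pow_succ, Nat.add_right_comm,
      Nat.add_assoc]

namespace ConvergentSeq

noncomputable def lim (a : ConvergentSeq) : ℂ := a.2.choose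

theorem tendsto_lim (a : ConvergentSeq) :
    Tendsto (fun j => (a : ℕ →ᵇ ℂ) j) atTop (𝓝 (lim a)) :=
  a.2.choose_spec

theorem lim_eq {a : ConvergentSeq} {L : ℂ}
    (h : Tendsto (fun j => (a : ℕ →ᵇ ℂ) j) atTop (𝓝 L)) : lim a = L :=
  tendsto_nhds_unique (tendsto_lim a) h

theorem norm_lim_le (a : ConvergentSeq) : ‖lim a‖ ≤ ‖(a : ℕ →ᵇ ℂ)‖ :=
  BoundedContinuousFunction.norm_le_norm_of_tendsto _ (tendsto_lim a)

theorem lipschitzWith_lim : LipschitzWith 1 lim := by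
  refine LipschitzWith.of_dist_le_mul fun a b => ?_
  rw [NNReal.coe_one, one_mul, Subtype.dist_eq, dist_eq_norm, dist_eq_norm]
  exact BoundedContinuousFunction.norm_le_norm_of_tendsto _ ((tendsto_lim a).sub (tendsto_lim b))

theorem continuous_lim : Continuous lim :=
  lipschitzWith_lim.continuous

theorem isOpenMap_lim : IsOpenMap lim := by
  refine IsOpenMap.of_sections fun a => ?_
  have hg : ∀ z : ℂ, Tendsto (fun j => ((a : ℕ →ᵇ ℂ) + (z - lim a) • 1) j)
      atTop (𝓝 z) := fun z => by
    simpa using (tendsto_lim a).add_const (z - lim a)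
  refine ⟨fun z => ⟨_, z, hg z⟩, ?_, by simp, fun z => lim_eq (hg z)⟩
  exact (continuous_const.add ((continuous_id.sub continuous_const).smul continuous_const)
    |>.subtype_mk _).continuousAt

section PowerShift

variable {m : ℕ} {P : ConvergentSeq → ConvergentSeq}
  (hP : ∀ (a : ConvergentSeq) (j : ℕ), ((P a : ℕ →ᵇ ℂ)) j
    = ((a : ℕ →ᵇ ℂ) (j + 1)) ^ m)
include hP

theorem iterate_apply (a : ConvergentSeq) (n j : ℕ) :
    ((P^[n] a : ConvergentSeq) : ℕ →ᵇ ℂ) j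
      = (a : ℕ →ᵇ ℂ) (j + n) ^ (m ^ n) :=
  iterate_apply_eq_pow_of_apply_eq_pow_succ 
    (φ := fun a : ConvergentSeq => ⇑(a : ℕ →ᵇ ℂ)) hP a n j

theorem lim_iterate (a : ConvergentSeq) (n : ℕ) : lim (P^[n] a) = lim a ^ (m ^ n) := by
  refine lim_eq ?_
  simp_rw [iterate_apply hP]
  exact ((tendsto_lim a).comp (tendsto_add_atTop_nat n)).pow _

theorem norm_lim_pow_le_norm_iterate (a : ConvergentSeq) (n : ℕ) :
    ‖lim a‖ ^ (m ^ n) ≤ ‖((P^[n] a : ConvergentSeq) : ℕ →ᵇ ℂ)‖ := by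
  simpa only [lim_iterate hP, norm_pow] using norm_lim_le (P^[n] a)

theorem norm_iterate_le {a : ConvergentSeq} {r : ℝ} {N : ℕ} (hr : 0 ≤ r)
    (ha : ∀ j ≥ N, ‖(a : ℕ →ᵇ ℂ) j‖ ≤ r) {n : ℕ} (hn : N ≤ n) :
    ‖((P^[n] a : ConvergentSeq) : ℕ →ᵇ ℂ)‖ ≤ r ^ (m ^ n) := by
  refine (BoundedContinuousFunction.norm_le (by positivity)).2 fun j => ?_
  rw [iterate_apply hP, norm_pow]
  exact pow_le_pow_left₀ (norm_nonneg _) (ha _ (by omega)) _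

theorem tendsto_iterate_zero_of_norm_lim_lt_one (hm : 1 < m) {a : ConvergentSeq}
    (ha : ‖lim a‖ < 1) :
    Tendsto (fun n => ((P^[n] a : ConvergentSeq) : ℕ →ᵇ ℂ)) atTop (𝓝 0) := by
  obtain ⟨r, hr_gt, hr_lt⟩ := exists_between ha
  obtain ⟨N, hN⟩ :=
    eventually_atTop.1 <| (tendsto_lim a).norm.eventually (eventually_le_nhds hr_gt)
  have hr0 : 0 ≤ r := (norm_nonneg _).trans hr_gt.le
  refine tendsto_zero_iff_norm_tendsto_zero.2 <| squeeze_zero' (.of_forall fun _ => norm_nonneg _)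
    ((eventually_ge_atTop N).mono fun n => norm_iterate_le hP hr0 hN) ?_
  exact (tendsto_pow_atTop_nhds_zero_of_lt_one hr0 hr_lt).comp
    (tendsto_pow_atTop_atTop_of_one_lt hm)

theorem tendsto_norm_iterate_atTop (hm : 1 < m) {a : ConvergentSeq} (ha : 1 < ‖lim a‖) :
    Tendsto (fun n => ‖((P^[n] a : ConvergentSeq) : ℕ →ᵇ ℂ)‖) atTop atTop :=
  tendsto_atTop_mono (norm_lim_pow_le_norm_iterate hP a)
    ((tendsto_pow_atTop_atTop_of_one_lt ha).comp (tendsto_pow_atTop_atTop_of_one_lt hm))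

theorem tendsto_iterate_zero_iff (hm : 1 < m) (a : ConvergentSeq) :
    Tendsto (fun n => P^[n] a) atTop (𝓝 ⟨0, 0, by simp⟩) ↔ ‖lim a‖ < 1 := by
  rw [tendsto_subtype_rng]
  refine ⟨fun h => ?_, tendsto_iterate_zero_of_norm_lim_lt_one hP hm⟩
  by_contra! ha
  obtain ⟨n, hn⟩ :=
    ((tendsto_zero_iff_norm_tendsto_zero.1 h).eventually (gt_mem_nhds one_pos)).exists
  exact hn.not_ge <| (one_le_pow₀ ha).trans (norm_lim_pow_le_norm_iterate hP a n)

end PowerShift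

end ConvergentSeq

/-- On the space `c` of convergent sequences with the sup norm, for the
`m`-homogeneous polynomial `P(a)_j = (a_{j+1})^m` (`m ≥ 2`): if `|lim a| < 1` then
`P^[n] a → 0`; if `|lim a| > 1` then every point of some neighborhood of `a` (in `c`)
has `‖P^[n]·‖_∞ → ∞`; and consequently `J_P = {a ∈ c : |lim a| = 1}`. -/
theorem julia_of_power_shift_on_c (m : ℕ) (hm : 2 ≤ m)
    (P : ConvergentSeq → ConvergentSeq)
    (hP : ∀ (a : ConvergentSeq) (j : ℕ), ((P a : BoundedContinuousFunction ℕ ℂ)) j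
      = ((a : BoundedContinuousFunction ℕ ℂ) (j + 1)) ^ m) :
    (∀ (a : ConvergentSeq) (L : ℂ),
        Tendsto (fun j => (a : BoundedContinuousFunction ℕ ℂ) j) atTop (nhds L) → ‖L‖ < 1 →
        Tendsto (fun n => P^[n] a) atTop
          (nhds ⟨0, 0, by simp⟩)) ∧
    (∀ (a : ConvergentSeq) (L : ℂ),
        Tendsto (fun j => (a : BoundedContinuousFunction ℕ ℂ) j) atTop (nhds L) → 1 < ‖L‖ →
        ∃ ε > (0 : ℝ), ∀ b : ConvergentSeq,
          ‖(b : BoundedContinuousFunction ℕ ℂ) - (a : BoundedContinuousFunction ℕ ℂ)‖ < ε →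
          Tendsto (fun n => ‖((P^[n] b : ConvergentSeq) : BoundedContinuousFunction ℕ ℂ)‖)
            atTop atTop) ∧
    frontier {a : ConvergentSeq | Tendsto (fun n => P^[n] a) atTop
        (nhds ⟨0, 0, by simp⟩)} =
      {a : ConvergentSeq | ∃ L : ℂ,
        Tendsto (fun j => (a : BoundedContinuousFunction ℕ ℂ) j) atTop (nhds L) ∧ ‖L‖ = 1} := by
  have hA : {a : ConvergentSeq | Tendsto (fun n => P^[n] a) atTop (𝓝 ⟨0, 0, by simp⟩)}
      = ConvergentSeq.lim ⁻¹' ball 0 1 := by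
    ext a
    simpa using ConvergentSeq.tendsto_iterate_zero_iff hP hm a
  refine ⟨fun a L hL hL1 => ?_, fun a L hL hL1 => ?_, ?_⟩
  · exact (ConvergentSeq.tendsto_iterate_zero_iff hP hm a).2 (ConvergentSeq.lim_eq hL ▸ hL1)
  · refine ⟨‖L‖ - 1, sub_pos.2 hL1, fun b hb => ?_⟩
    refine ConvergentSeq.tendsto_norm_iterate_atTop hP hm ?_
    have hdist : ‖L - ConvergentSeq.lim b‖ ≤ ‖(b : ℕ →ᵇ ℂ) - a‖ := by
      simpa [ConvergentSeq.lim_eq hL, Subtype.dist_eq, ← dist_eq_norm, dist_comm] using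
        ConvergentSeq.lipschitzWith_lim.dist_le_mul a b
    linarith [norm_sub_norm_le L (ConvergentSeq.lim b)]
  · rw [hA, ← ConvergentSeq.isOpenMap_lim.preimage_frontier_eq_frontier_preimage
      ConvergentSeq.continuous_lim, frontier_ball 0 one_ne_zero]
    ext a
    refine ⟨fun ha => ⟨_, ConvergentSeq.tendsto_lim a, by simpa using ha⟩, ?_⟩
    rintro ⟨L, hL, hL1⟩
    simpa [ConvergentSeq.lim_eq hL] using hL1
end

section
/- On c₀, the m-homogeneous polynomial P(a)_j = a_{j+1}^m (m ≥ 2) satisfies: every orbit converges to 0, i.e., A_P = c₀, so the Julia set J_P is empty. The same holds on ℓ₂ for P(x) = (x₂², x₃², ...). -/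
open Filter

private lemma c0_iter (m : ℕ) (P : ZeroAtInftyContinuousMap ℕ ℂ → ZeroAtInftyContinuousMap ℕ ℂ)
    (hP : ∀ (a : ZeroAtInftyContinuousMap ℕ ℂ) (j : ℕ), (P a) j = (a (j + 1)) ^ m)
    (a : ZeroAtInftyContinuousMap ℕ ℂ) :
    ∀ n j, (P^[n] a) j = (a (j + n)) ^ (m ^ n) := by
  intro n
  induction n generalizing a with
  | zero => simp
  | succ n ih =>
    intro j
    rw [Function.iterate_succ_apply, ih (P a) j, hP, ← pow_mul, ← pow_succ']
    ring_nf

private lemma l2_iter (P₂ : lp (fun _ : ℕ => ℂ) 2 → lp (fun _ : ℕ => ℂ) 2)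
    (hP₂ : ∀ (x : lp (fun _ : ℕ => ℂ) 2) (j : ℕ),
      (P₂ x : ℕ → ℂ) j = ((x : ℕ → ℂ) (j + 1)) ^ 2)
    (x : lp (fun _ : ℕ => ℂ) 2) :
    ∀ n j, (P₂^[n] x : ℕ → ℂ) j = ((x : ℕ → ℂ) (j + n)) ^ (2 ^ n) := by
  intro n
  induction n generalizing x with
  | zero => simp
  | succ n ih =>
    intro j
    rw [Function.iterate_succ_apply, ih (P₂ x) j, hP₂, ← pow_mul, ← pow_succ']
    ring_nf

private lemma c0_tendsto (m : ℕ) (hm : 2 ≤ m)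
    (P : ZeroAtInftyContinuousMap ℕ ℂ → ZeroAtInftyContinuousMap ℕ ℂ)
    (hP : ∀ (a : ZeroAtInftyContinuousMap ℕ ℂ) (j : ℕ), (P a) j = (a (j + 1)) ^ m)
    (a : ZeroAtInftyContinuousMap ℕ ℂ) :
    Tendsto (fun n => P^[n] a) atTop (nhds 0) := by
  rw [NormedAddCommGroup.tendsto_nhds_zero]
  intro ε hε
  set δ : ℝ := min ε 1 / 2 with hδdef
  have hδpos : 0 < δ := by positivity
  have hδ1 : δ ≤ 1 := by
    have : min ε 1 ≤ 1 := min_le_right _ _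
    simp only [hδdef]; linarith
  have hδε : δ < ε := by
    have : min ε 1 ≤ ε := min_le_left _ _
    simp only [hδdef]; linarith
  -- coordinates of a tend to 0
  have hz : Tendsto (fun k => a k) atTop (nhds 0) := by
    have := a.zero_at_infty'
    rwa [cocompact_eq_atTop (α := ℕ)] at this
  rw [NormedAddCommGroup.tendsto_nhds_zero] at hz
  obtain ⟨N, hN⟩ := (hz δ hδpos).exists_forall_of_atTop
  filter_upwards [eventually_ge_atTop N] with n hn
  have hnorm : ‖P^[n] a‖ ≤ δ := by
    rw [← ZeroAtInftyContinuousMap.norm_toBCF_eq_norm]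
    apply BoundedContinuousFunction.norm_le hδpos.le |>.2
    intro j
    have : ((P^[n] a).toBCF : ℕ → ℂ) j = (a (j + n)) ^ (m ^ n) := c0_iter m P hP a n j
    rw [this, norm_pow]
    have h1 : ‖a (j + n)‖ ≤ δ := (hN (j + n) (le_trans hn (Nat.le_add_left n j))).le
    calc ‖a (j + n)‖ ^ m ^ n ≤ δ ^ m ^ n :=
          pow_le_pow_left₀ (norm_nonneg _) h1 _
      _ ≤ δ := pow_le_of_le_one hδpos.le hδ1 (by positivity)
  exact lt_of_le_of_lt hnorm hδε

set_option maxHeartbeats 1000000 in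
private lemma l2_tendsto (P₂ : lp (fun _ : ℕ => ℂ) 2 → lp (fun _ : ℕ => ℂ) 2)
    (hP₂ : ∀ (x : lp (fun _ : ℕ => ℂ) 2) (j : ℕ),
      (P₂ x : ℕ → ℂ) j = ((x : ℕ → ℂ) (j + 1)) ^ 2)
    (x : lp (fun _ : ℕ => ℂ) 2) :
    Tendsto (fun n => P₂^[n] x) atTop (nhds 0) := by
  rw [NormedAddCommGroup.tendsto_nhds_zero]
  intro ε hε
  set δ : ℝ := min ε 1 / 2 with hδdef
  have hδpos : 0 < δ := by positivity
  have hδ1 : δ ≤ 1 := by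
    have : min ε 1 ≤ 1 := min_le_right _ _
    simp only [hδdef]; linarith
  have hδε : δ < ε := by
    have : min ε 1 ≤ ε := min_le_left _ _
    simp only [hδdef]; linarith
  have htwo : (0:ℝ) < (2 : ENNReal).toReal := by norm_num
  have hsum : Summable (fun k => ‖(x : ℕ → ℂ) k‖ ^ (2:ℕ)) := by
    have := (lp.memℓp x).summable htwo
    convert this using 2 with k
    rw [← Real.rpow_natCast ‖(x : ℕ → ℂ) k‖ 2]
    norm_num
  -- coordinates eventually ≤ 1
  have hz : Tendsto (fun k => ‖(x : ℕ → ℂ) k‖ ^ (2:ℕ)) atTop (nhds 0) :=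
    hsum.tendsto_atTop_zero
  obtain ⟨N₁, hN₁⟩ := (hz.eventually (eventually_lt_nhds zero_lt_one)).exists_forall_of_atTop
  have hcoord : ∀ k ≥ N₁, ‖(x : ℕ → ℂ) k‖ ≤ 1 := by
    intro k hk
    have := (hN₁ k hk).le
    nlinarith [norm_nonneg ((x : ℕ → ℂ) k)]
  -- tails tend to 0
  have htail : Tendsto (fun n => ∑' k, ‖(x : ℕ → ℂ) (k + n)‖ ^ (2:ℕ)) atTop (nhds 0) :=
    tendsto_sum_nat_add (fun k => ‖(x : ℕ → ℂ) k‖ ^ (2:ℕ))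
  have hδ2 : 0 < δ ^ (2:ℕ) := by positivity
  obtain ⟨N₂, hN₂⟩ := (htail.eventually (eventually_lt_nhds hδ2)).exists_forall_of_atTop
  filter_upwards [eventually_ge_atTop (max N₁ N₂)] with n hn
  have hn1 : N₁ ≤ n := le_trans (le_max_left _ _) hn
  have hn2 : N₂ ≤ n := le_trans (le_max_right _ _) hn
  have hsumn : Summable (fun k => ‖(x : ℕ → ℂ) (k + n)‖ ^ (2:ℕ)) :=
    (summable_nat_add_iff n).2 hsum
  have hterm : ∀ j, ‖(P₂^[n] x : ℕ → ℂ) j‖ ^ (2:ℕ) ≤ ‖(x : ℕ → ℂ) (j + n)‖ ^ (2:ℕ) := by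
    intro j
    rw [l2_iter P₂ hP₂ x n j, norm_pow, ← pow_mul]
    calc ‖(x : ℕ → ℂ) (j + n)‖ ^ (2 ^ n * 2)
        ≤ ‖(x : ℕ → ℂ) (j + n)‖ ^ (2:ℕ) := by
          apply pow_le_pow_of_le_one (norm_nonneg _)
            (hcoord _ (le_trans hn1 (Nat.le_add_left n j)))
          nlinarith [Nat.one_le_two_pow (n := n)]
      _ = _ := rfl
  have hsumlhs : Summable (fun j => ‖(P₂^[n] x : ℕ → ℂ) j‖ ^ (2:ℕ)) :=
    Summable.of_nonneg_of_le (fun j => by positivity) hterm hsumn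
  have hle : ∑' j, ‖(P₂^[n] x : ℕ → ℂ) j‖ ^ (2:ℕ) ≤ δ ^ (2:ℕ) :=
    le_trans (Summable.tsum_le_tsum hterm hsumlhs hsumn) (hN₂ n hn2).le
  have hnorm : ‖P₂^[n] x‖ ≤ δ := by
    apply lp.norm_le_of_tsum_le htwo hδpos.le
    have h2 : (2 : ENNReal).toReal = ((2:ℕ):ℝ) := by norm_num
    rw [h2]
    simp only [Real.rpow_natCast]
    exact hle
  exact lt_of_le_of_lt hnorm hδε

set_option synthInstance.maxHeartbeats 1000000 in
set_option maxHeartbeats 1000000 in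
/-- On `c₀` (realized as `C₀(ℕ, ℂ)`, null sequences with the sup norm), the
`m`-homogeneous polynomial `P(a)_j = (a_{j+1})^m` (`m ≥ 2`) satisfies `A_P = c₀`, i.e.
every orbit converges to `0`, so the Julia set `J_P = frontier A_P` is empty.  The same
holds on `ℓ₂` for `P₂(x) = (x₂², x₃², …)`. -/
theorem power_shift_trivial_dynamics (m : ℕ) (hm : 2 ≤ m)
    (P : ZeroAtInftyContinuousMap ℕ ℂ → ZeroAtInftyContinuousMap ℕ ℂ)
    (hP : ∀ (a : ZeroAtInftyContinuousMap ℕ ℂ) (j : ℕ), (P a) j = (a (j + 1)) ^ m)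
    (P₂ : lp (fun _ : ℕ => ℂ) 2 → lp (fun _ : ℕ => ℂ) 2)
    (hP₂ : ∀ (x : lp (fun _ : ℕ => ℂ) 2) (j : ℕ),
      (P₂ x : ℕ → ℂ) j = ((x : ℕ → ℂ) (j + 1)) ^ 2) :
    ((∀ a : ZeroAtInftyContinuousMap ℕ ℂ, Tendsto (fun n => P^[n] a) atTop (nhds 0)) ∧
      frontier {a : ZeroAtInftyContinuousMap ℕ ℂ |
        Tendsto (fun n => P^[n] a) atTop (nhds 0)} = ∅) ∧
    ((∀ x : lp (fun _ : ℕ => ℂ) 2, Tendsto (fun n => P₂^[n] x) atTop (nhds 0)) ∧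
      frontier {x : lp (fun _ : ℕ => ℂ) 2 |
        Tendsto (fun n => P₂^[n] x) atTop (nhds 0)} = ∅) := by
  have h1 := c0_tendsto m hm P hP
  have h2 := l2_tendsto P₂ hP₂
  refine ⟨⟨h1, ?_⟩, h2, ?_⟩
  · have : {a : ZeroAtInftyContinuousMap ℕ ℂ |
        Tendsto (fun n => P^[n] a) atTop (nhds 0)} = Set.univ := by
      ext a; simp [h1 a]
    rw [this, frontier_univ]
  · have : {x : lp (fun _ : ℕ => ℂ) 2 |
        Tendsto (fun n => P₂^[n] x) atTop (nhds 0)} = Set.univ := by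
      ext x; simp [h2 x]
    rw [this, frontier_univ]
end

section
/- Let X = ℓ_p (1 ≤ p < ∞) and P(x) = x₁ · B(x) where B is the backward shift. Then ‖P‖ = 2^{-2/p}, so the limit radius is r_P = 2^{2/p}. -/
/-!
Write `q = p.toReal`, `a = ‖x₁‖^q` and `b = ∑_{j ≥ 2} ‖x_j‖^q`. Then `‖P x‖^q = a b` while
`a + b = ‖x‖^q ≤ 1`, so AM-GM gives `‖P x‖^q ≤ 1/4`, i.e. `‖P x‖ ≤ 2^(-2/q)`. Equality holds at
`x = 2^(-1/q) (e₁ + e₂)`, a unit vector with `P x = 2^(-2/q) e₁`.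
-/

theorem Real.rpow_div_rpow_self {x : ℝ} (hx : 0 ≤ x) (a : ℝ) {q : ℝ} (hq : q ≠ 0) :
    (x ^ (a / q)) ^ q = x ^ a := by
  rw [← Real.rpow_mul hx, div_mul_cancel₀ _ hq]

namespace lp

variable {p : ENNReal}

theorem norm_rpow_eq_norm_apply_zero_rpow_add_tsum {E : ℕ → Type*}
    [∀ i, NormedAddCommGroup (E i)] (hp : 0 < p.toReal) (f : lp E p) :
    ‖f‖ ^ p.toReal = ‖f 0‖ ^ p.toReal + ∑' j, ‖f (j + 1)‖ ^ p.toReal := by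
  rw [norm_rpow_eq_tsum hp]
  exact ((lp.memℓp f).summable hp).tsum_eq_zero_add

variable {𝕜 : Type*} [NormedDivisionRing 𝕜]

theorem norm_rpow_of_apply_eq_mul_shift (hp : 0 < p.toReal) {x y : lp (fun _ : ℕ => 𝕜) p}
    (hy : ∀ j, y j = x 0 * x (j + 1)) :
    ‖y‖ ^ p.toReal = ‖x 0‖ ^ p.toReal * ∑' j, ‖x (j + 1)‖ ^ p.toReal := by
  simp_rw [norm_rpow_eq_tsum hp, hy, norm_mul, Real.mul_rpow (norm_nonneg _) (norm_nonneg _),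
    tsum_mul_left]

theorem norm_le_of_apply_eq_mul_shift (hp : 0 < p.toReal) {x y : lp (fun _ : ℕ => 𝕜) p}
    (hx : ‖x‖ ≤ 1) (hy : ∀ j, y j = x 0 * x (j + 1)) :
    ‖y‖ ≤ (2 : ℝ) ^ (-(2 : ℝ) / p.toReal) := by
  set a := ‖x 0‖ ^ p.toReal
  set b := ∑' j, ‖x (j + 1)‖ ^ p.toReal
  have ha : 0 ≤ a := by positivity
  have hb : 0 ≤ b := tsum_nonneg fun _ => by positivity
  have hab : a + b ≤ 1 := by
    rw [← norm_rpow_eq_norm_apply_zero_rpow_add_tsum hp]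
    exact Real.rpow_le_one (norm_nonneg' x) hx hp.le
  rw [← Real.rpow_le_rpow_iff (norm_nonneg' y) (by positivity) hp,
    Real.rpow_div_rpow_self zero_le_two _ hp.ne', norm_rpow_of_apply_eq_mul_shift hp hy]
  calc a * b ≤ (a + b) ^ 2 / 4 := by linarith [four_mul_le_sq_add a b]
    _ ≤ 1 / 4 := by gcongr; exact pow_le_one₀ (add_nonneg ha hb) hab
    _ = 2 ^ (-2 : ℝ) := by norm_num

end lp

theorem exists_norm_le_one_norm_apply_zero_mul_apply_one {𝕜 : Type*} [RCLike 𝕜]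
    {p : ENNReal} (hp : 0 < p.toReal) :
    ∃ x : lp (fun _ : ℕ => 𝕜) p, ‖x‖ ≤ 1 ∧ ‖x 0 * x 1‖ = (2 : ℝ) ^ (-(2 : ℝ) / p.toReal) := by
  set c : ℝ := (2 : ℝ) ^ (-(1 : ℝ) / p.toReal)
  have hc : 0 ≤ c := by positivity
  have hcq : c ^ p.toReal = 1 / 2 := by
    rw [Real.rpow_div_rpow_self zero_le_two _ hp.ne']; norm_num
  set x : lp (fun _ : ℕ => 𝕜) p := lp.single p 0 (c : 𝕜) + lp.single p 1 (c : 𝕜)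
  refine ⟨x, ?_, ?_⟩
  · have h := lp.norm_sum_single hp (fun _ : ℕ => (c : 𝕜)) {0, 1}
    simp only [Finset.sum_pair zero_ne_one, RCLike.norm_ofReal, abs_of_nonneg hc, hcq] at h
    rw [← Real.rpow_le_rpow_iff (lp.norm_nonneg' x) zero_le_one hp, h]
    norm_num
  · have hx0 : x 0 = c := by simp [x, lp.single_apply]
    have hx1 : x 1 = c := by simp [x, lp.single_apply]
    rw [hx0, hx1, norm_mul, RCLike.norm_ofReal, abs_of_nonneg hc, ← Real.rpow_add two_pos,
      ← add_div]
    norm_num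

/-- On `ℓ_p` (`1 ≤ p < ∞`), the 2-homogeneous polynomial
`P(x) = x₁ • B(x)` (with `B` the backward shift) has norm
`‖P‖ = sup_{‖x‖ ≤ 1} ‖P x‖ = 2^(-2/p)`, so the limit radius is `r_P = 2^(2/p)`. -/
theorem norm_of_x1_backward_shift (p : ENNReal) [Fact (1 ≤ p)] (hp : p ≠ ⊤)
    (P : lp (fun _ : ℕ => ℂ) p → lp (fun _ : ℕ => ℂ) p)
    (hP : ∀ (x : lp (fun _ : ℕ => ℂ) p) (j : ℕ),
      (P x : ℕ → ℂ) j = (x : ℕ → ℂ) 0 * (x : ℕ → ℂ) (j + 1)) :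
    (⨆ x : {x : lp (fun _ : ℕ => ℂ) p // ‖x‖ ≤ 1}, ‖P x.1‖)
      = (2 : ℝ) ^ (-(2 : ℝ) / p.toReal) := by
  have hp0 : p ≠ 0 := (zero_lt_one.trans_le (Fact.out : (1 : ENNReal) ≤ p)).ne'
  have hq : 0 < p.toReal := ENNReal.toReal_pos hp0 hp
  have hbound (x : {x : lp (fun _ : ℕ => ℂ) p // ‖x‖ ≤ 1}) :
      ‖P x.1‖ ≤ (2 : ℝ) ^ (-(2 : ℝ) / p.toReal) :=
    lp.norm_le_of_apply_eq_mul_shift hq x.2 (hP x.1)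
  obtain ⟨x₀, hx₀, hx₀P⟩ := exists_norm_le_one_norm_apply_zero_mul_apply_one (𝕜 := ℂ) hq
  have : Nonempty {x : lp (fun _ : ℕ => ℂ) p // ‖x‖ ≤ 1} := ⟨⟨0, by simp⟩⟩
  refine le_antisymm (ciSup_le hbound) ?_
  refine le_ciSup_of_le ⟨_, Set.forall_mem_range.2 hbound⟩ ⟨x₀, hx₀⟩ ?_
  rw [← hx₀P, ← hP]
  exact lp.norm_apply_le_norm hp0 _ 0
end

section
/- Let P(x) = x₁·B(x) on ℓ_p (1 ≤ p < ∞). The vector x̄ = 2^{1/p}(1, 2^{-1/p}, 2^{-2/p}, 2^{-3/p}, ...) is a fixed point of P and ‖x̄‖_p = 2^{2/p} = r_P. -/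
/-! x̄ is the geometric sequence `c * c⁻¹ ^ j` with `c = 2^(1/p)`. A geometric sequence `c * r ^ j`
with `c * r = 1` is fixed by `x ↦ x₀ • B x`, since `x₀ * x_{j+1} = c * (c r) * r ^ j`, and the
`p`-th power of its norm is the geometric series `‖c‖^p / (1 - ‖r‖^p)`, here `2 / (1 - 1/2) = 4`. -/

theorem mul_mul_pow_succ_of_mul_eq_one {M : Type*} [Monoid M] {c r : M} (h : c * r = 1)
    (j : ℕ) : c * (c * r ^ (j + 1)) = c * r ^ j := by
  rw [pow_succ', ← mul_assoc c r, h, one_mul]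

theorem Real.rpow_neg_natCast_div {x : ℝ} (hx : 0 ≤ x) (t : ℝ) (j : ℕ) :
    x ^ (-(j : ℝ) / t) = (x ^ (1 / t))⁻¹ ^ j := by
  rw [neg_div, Real.rpow_neg hx, div_eq_mul_one_div (j : ℝ) t, mul_comm (j : ℝ),
    Real.rpow_mul_natCast hx, inv_pow]

section Geometric

variable {𝕜 : Type*} [NormedDivisionRing 𝕜] {p : ENNReal} {c r : 𝕜}

theorem norm_mul_pow_rpow (t : ℝ) (c r : 𝕜) (j : ℕ) :
    ‖c * r ^ j‖ ^ t = ‖c‖ ^ t * (‖r‖ ^ t) ^ j := by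
  rw [norm_mul, norm_pow, Real.mul_rpow (norm_nonneg _) (by positivity),
    Real.rpow_pow_comm (norm_nonneg _)]

theorem hasSum_norm_mul_pow_rpow (hp : 0 < p.toReal) (c : 𝕜) (hr : ‖r‖ < 1) :
    HasSum (fun j : ℕ => ‖c * r ^ j‖ ^ p.toReal)
      (‖c‖ ^ p.toReal / (1 - ‖r‖ ^ p.toReal)) := by
  simp only [norm_mul_pow_rpow p.toReal]
  rw [div_eq_mul_inv]
  exact (hasSum_geometric_of_lt_one (by positivity)
    (Real.rpow_lt_one (norm_nonneg _) hr hp)).mul_left _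

theorem memℓp_mul_pow (hp : 0 < p.toReal) (c : 𝕜) (hr : ‖r‖ < 1) :
    Memℓp (fun j : ℕ => c * r ^ j) p :=
  memℓp_gen (hasSum_norm_mul_pow_rpow hp c hr).summable

theorem lp.norm_rpow_of_eq_mul_pow (hp : 0 < p.toReal) (hr : ‖r‖ < 1)
    (x : lp (fun _ : ℕ => 𝕜) p) (hx : ∀ j, x j = c * r ^ j) :
    ‖x‖ ^ p.toReal = ‖c‖ ^ p.toReal / (1 - ‖r‖ ^ p.toReal) := by
  rw [lp.norm_rpow_eq_tsum hp, ← (hasSum_norm_mul_pow_rpow hp c hr).tsum_eq]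
  simp only [hx]

end Geometric

/-- On `ℓ_p` (`1 ≤ p < ∞`) with `P(x) = x₁ • B(x)` (`B` the backward shift),
the vector `x̄ = 2^(1/p) • (1, 2^(-1/p), 2^(-2/p), …)` belongs to `ℓ_p`, is a fixed point
of `P`, and `‖x̄‖_p = 2^(2/p) = r_P`. -/
theorem fixed_point_of_x1_backward_shift (p : ENNReal) [Fact (1 ≤ p)] (hp : p ≠ ⊤)
    (P : lp (fun _ : ℕ => ℂ) p → lp (fun _ : ℕ => ℂ) p)
    (hP : ∀ (x : lp (fun _ : ℕ => ℂ) p) (j : ℕ),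
      (P x : ℕ → ℂ) j = (x : ℕ → ℂ) 0 * (x : ℕ → ℂ) (j + 1)) :
    ∃ xb : lp (fun _ : ℕ => ℂ) p,
      (∀ j : ℕ, (xb : ℕ → ℂ) j
        = (((2 : ℝ) ^ ((1 : ℝ) / p.toReal) * (2 : ℝ) ^ (-(j : ℝ) / p.toReal) : ℝ) : ℂ)) ∧
      P xb = xb ∧ ‖xb‖ = (2 : ℝ) ^ ((2 : ℝ) / p.toReal) := by
  set t := p.toReal
  have ht : 0 < t := ENNReal.toReal_pos (zero_lt_one.trans_le Fact.out).ne' hp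
  set a : ℝ := 2 ^ (1 / t)
  have ha : 1 < a := Real.one_lt_rpow one_lt_two (by positivity)
  have ha_rpow : a ^ t = 2 := by
    rw [← Real.rpow_mul zero_le_two, one_div_mul_cancel ht.ne', Real.rpow_one]
  have hr : ‖(a : ℂ)⁻¹‖ < 1 := by
    rw [norm_inv, Complex.norm_real, Real.norm_of_nonneg (by positivity)]
    exact inv_lt_one_of_one_lt₀ ha
  set xb : lp (fun _ : ℕ => ℂ) p := ⟨_, memℓp_mul_pow ht (a : ℂ) hr⟩
  have hxb (j : ℕ) : xb j = (a : ℂ) * (a : ℂ)⁻¹ ^ j := rfl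
  refine ⟨xb, fun j => ?_, ?_, ?_⟩
  · rw [hxb, Real.rpow_neg_natCast_div zero_le_two]
    push_cast
    rfl
  · have hca : (a : ℂ) * (a : ℂ)⁻¹ = 1 := mul_inv_cancel₀ (by exact_mod_cast (by positivity))
    ext j
    rw [hP, hxb, hxb, hxb, pow_zero, mul_one]
    exact mul_mul_pow_succ_of_mul_eq_one hca j
  · have hnorm := lp.norm_rpow_of_eq_mul_pow ht hr xb hxb
    rw [norm_inv, Complex.norm_real, Real.norm_of_nonneg (by positivity),
      Real.inv_rpow (by positivity), ha_rpow] at hnorm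
    rw [← Real.rpow_left_inj (norm_nonneg _) (by positivity) ht.ne', hnorm,
      ← Real.rpow_mul zero_le_two, div_mul_cancel₀ _ ht.ne']
    norm_num
end

section
/- Let P be a homogeneous polynomial on a Banach space, Γ ⊆ ℂ a bounded set, and x a Γ-supercyclic vector for P (i.e., Γ·Orb_P(x) is dense in X, X nonzero). Then x ∉ A_P. Dually, if Γ \ {0} is bounded away from zero and x is Γ-supercyclic, then x ∈ A_P. Hence if Γ is bounded and Γ \ {0} is bounded away from zero, no m-homogeneous polynomial with m ≥ 2 and ‖P‖ > 0 is Γ-supercyclic. -/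
open Filter

private lemma contract_aux {X : Type*} [NormedAddCommGroup X] [NormedSpace ℂ X]
    (P : X → X) (m : ℕ) (hm : 2 ≤ m)
    (C : ℝ) (hC : 0 < C)
    (hbound : ∀ x : X, ‖P x‖ ≤ C * ‖x‖ ^ m)
    (y : X) (hy : C * ‖y‖ ^ (m - 1) < 1) :
    Tendsto (fun n => P^[n] y) atTop (nhds 0) := by
  set q : ℝ := C * ‖y‖ ^ (m - 1) with hq
  have hq0 : 0 ≤ q := mul_nonneg hC.le (pow_nonneg (norm_nonneg _) _)
  have hmy : ‖y‖ ^ m = ‖y‖ ^ (m - 1) * ‖y‖ := by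
    rw [← pow_succ]
    congr 1
    omega
  have key : ∀ n, ‖P^[n] y‖ ≤ q ^ n * ‖y‖ := by
    intro n
    induction n with
    | zero => simp
    | succ n ih =>
      rw [Function.iterate_succ_apply']
      calc ‖P (P^[n] y)‖ ≤ C * ‖P^[n] y‖ ^ m := hbound _
        _ ≤ C * (q ^ n * ‖y‖) ^ m := by
            gcongr
        _ = q ^ (n * m) * (C * ‖y‖ ^ m) := by ring
        _ = q ^ (n * m) * (q * ‖y‖) := by rw [hmy, hq]; ring
        _ ≤ q ^ n * (q * ‖y‖) := by
            have h := pow_le_pow_of_le_one hq0 hy.le (Nat.le_mul_of_pos_right n (show 0 < m by omega))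
            exact mul_le_mul_of_nonneg_right h (mul_nonneg hq0 (norm_nonneg _))
        _ = q ^ (n + 1) * ‖y‖ := by ring
  have hq1 : q < 1 := hy
  have hlim : Tendsto (fun n : ℕ => q ^ n * ‖y‖) atTop (nhds 0) := by
    have := tendsto_pow_atTop_nhds_zero_of_lt_one hq0 hq1
    simpa using this.mul_const ‖y‖
  exact squeeze_zero_norm key hlim

private lemma lower_bound_aux {X : Type*} [NormedAddCommGroup X] [NormedSpace ℂ X]
    (P : X → X) (m : ℕ) (hm : 2 ≤ m)
    (C : ℝ) (hC : 0 < C)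
    (hbound : ∀ x : X, ‖P x‖ ≤ C * ‖x‖ ^ m)
    (x : X) (hx : ¬ Tendsto (fun n => P^[n] x) atTop (nhds 0)) :
    ∀ n, min 1 C⁻¹ ≤ ‖P^[n] x‖ := by
  have key : ∀ n, 1 ≤ C * ‖P^[n] x‖ ^ (m - 1) := by
    intro n
    by_contra h
    push_neg at h
    have := contract_aux P m hm C hC hbound (P^[n] x) h
    have h2 : Tendsto (fun k => P^[k + n] x) atTop (nhds 0) := by
      have : ∀ k, P^[k + n] x = P^[k] (P^[n] x) := fun k => Function.iterate_add_apply P k n x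
      simpa [this] using contract_aux P m hm C hC hbound (P^[n] x) h
    exact hx ((tendsto_add_atTop_iff_nat (f := fun k => P^[k] x) n).mp h2)
  intro n
  set t : ℝ := ‖P^[n] x‖ with ht
  have ht0 : 0 ≤ t := norm_nonneg _
  rcases le_or_gt 1 t with h1 | h1
  · exact le_trans (min_le_left _ _) h1
  · refine le_trans (min_le_right _ _) ?_
    have h2 : 1 ≤ C * t ^ (m - 1) := key n
    have h3 : t ^ (m - 1) ≤ t := by
      have := pow_le_pow_of_le_one ht0 h1.le (show 1 ≤ m - 1 by omega)
      simpa using this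
    have : 1 ≤ C * t := le_trans h2 (by nlinarith)
    rw [inv_le_iff_one_le_mul₀ hC]
    linarith [this]

private lemma exists_norm_eq_aux {X : Type*} [NormedAddCommGroup X] [NormedSpace ℂ X]
    [Nontrivial X] (t : ℝ) (ht : 0 < t) : ∃ y : X, ‖y‖ = t := by
  obtain ⟨v, hv⟩ := exists_ne (0 : X)
  have hv0 : (0:ℝ) < ‖v‖ := norm_pos_iff.mpr hv
  refine ⟨((t / ‖v‖ : ℝ) : ℂ) • v, ?_⟩
  rw [norm_smul]
  simp only [Complex.norm_real, Real.norm_eq_abs]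
  rw [abs_of_pos (div_pos ht hv0)]
  field_simp

/-- Let `Γ ⊆ ℂ` and let `x` be a `Γ`-supercyclic vector for an
`m`-homogeneous polynomial `P` (`m ≥ 2`, `‖P‖ > 0`) on a nonzero Banach space, i.e.
`Γ • Orb_P(x)` is dense.  If `Γ` is bounded then `x ∉ A_P`; if `Γ \ {0}` is bounded away
from zero then `x ∈ A_P`; hence if both hold, `P` is not `Γ`-supercyclic at all. -/
theorem gamma_supercyclic_vectors {X : Type*} [NormedAddCommGroup X] [NormedSpace ℂ X]
    [CompleteSpace X] [Nontrivial X]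
    (P : X → X) (m : ℕ) (hm : 2 ≤ m)
    (hhom : ∀ (c : ℂ) (x : X), P (c • x) = c ^ m • P x)
    (C : ℝ) (hC : 0 < C)
    (hbound : ∀ x : X, ‖P x‖ ≤ C * ‖x‖ ^ m)
    (hsup : ∀ ε > (0 : ℝ), ∃ x : X, ‖x‖ ≤ 1 ∧ C - ε < ‖P x‖)
    (Γ : Set ℂ) :
    (∀ x : X, Bornology.IsBounded Γ →
        Dense {z : X | ∃ γ ∈ Γ, ∃ n : ℕ, z = γ • P^[n] x} →
        ¬ Tendsto (fun n => P^[n] x) atTop (nhds 0)) ∧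
    (∀ x : X, (∃ δ > (0 : ℝ), ∀ γ ∈ Γ, γ ≠ 0 → δ ≤ ‖γ‖) →
        Dense {z : X | ∃ γ ∈ Γ, ∃ n : ℕ, z = γ • P^[n] x} →
        Tendsto (fun n => P^[n] x) atTop (nhds 0)) ∧
    (Bornology.IsBounded Γ → (∃ δ > (0 : ℝ), ∀ γ ∈ Γ, γ ≠ 0 → δ ≤ ‖γ‖) →
        ¬ ∃ x : X, Dense {z : X | ∃ γ ∈ Γ, ∃ n : ℕ, z = γ • P^[n] x}) := by
  have part1 : ∀ x : X, Bornology.IsBounded Γ →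
      Dense {z : X | ∃ γ ∈ Γ, ∃ n : ℕ, z = γ • P^[n] x} →
      ¬ Tendsto (fun n => P^[n] x) atTop (nhds 0) := by
    intro x hΓ hd htend
    obtain ⟨M, hM⟩ := (isBounded_iff_forall_norm_le).mp hΓ
    set M' : ℝ := max M 0 with hM'
    have hM'0 : 0 ≤ M' := le_max_right _ _
    have hMle : ∀ γ ∈ Γ, ‖γ‖ ≤ M' := fun γ hγ => le_trans (hM γ hγ) (le_max_left _ _)
    -- bounded orbit
    have hbdd : BddAbove (Set.range fun n => ‖P^[n] x‖) := by
      have h0 : Tendsto (fun n => ‖P^[n] x‖) atTop (nhds 0) := by simpa using htend.norm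
      exact h0.bddAbove_range
    obtain ⟨S, hS⟩ := hbdd
    have hS0 : 0 ≤ S := le_trans (norm_nonneg x) (hS ⟨0, by simp⟩)
    -- every element of the set has norm ≤ M' * S
    have hbd : ∀ z ∈ {z : X | ∃ γ ∈ Γ, ∃ n : ℕ, z = γ • P^[n] x}, ‖z‖ ≤ M' * S := by
      rintro z ⟨γ, hγ, n, rfl⟩
      rw [norm_smul]
      exact mul_le_mul (hMle γ hγ) (hS ⟨n, rfl⟩) (norm_nonneg _) hM'0
    obtain ⟨y, hy⟩ := exists_norm_eq_aux (X := X) (M' * S + 2) (by positivity)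
    obtain ⟨z, hz, hzmem⟩ := (Metric.dense_iff.mp hd y 1 one_pos)
    have h1 : ‖z‖ ≤ M' * S := hbd z hzmem
    have h2 : ‖z - y‖ < 1 := by
      rw [Metric.mem_ball, dist_eq_norm] at hz
      exact hz
    have h3 : ‖y‖ - ‖z‖ ≤ ‖z - y‖ := by
      rw [norm_sub_rev]; exact norm_sub_norm_le y z
    rw [hy] at h3
    linarith
  have part2 : ∀ x : X, (∃ δ > (0 : ℝ), ∀ γ ∈ Γ, γ ≠ 0 → δ ≤ ‖γ‖) →
      Dense {z : X | ∃ γ ∈ Γ, ∃ n : ℕ, z = γ • P^[n] x} →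
      Tendsto (fun n => P^[n] x) atTop (nhds 0) := by
    intro x hδ hd
    by_contra htend
    obtain ⟨δ, hδ0, hδle⟩ := hδ
    set r : ℝ := min 1 C⁻¹ with hr
    have hr0 : 0 < r := lt_min one_pos (inv_pos.mpr hC)
    have hlow := lower_bound_aux P m hm C hC hbound x htend
    obtain ⟨v, hv⟩ := exists_norm_eq_aux (X := X) (δ * r / 2) (by positivity)
    obtain ⟨z, hz, hzmem⟩ := Metric.dense_iff.mp hd v (δ * r / 4) (by positivity)
    obtain ⟨γ, hγ, n, rfl⟩ := hzmem
    rw [Metric.mem_ball, dist_eq_norm] at hz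
    have hdr : 0 < δ * r := mul_pos hδ0 hr0
    rcases eq_or_ne γ 0 with rfl | hγ0
    · simp only [zero_smul, zero_sub, norm_neg] at hz
      rw [hv] at hz
      linarith
    · have h1 : δ * r ≤ ‖γ • P^[n] x‖ := by
        rw [norm_smul]
        exact mul_le_mul (hδle γ hγ hγ0) (hlow n) hr0.le
          (le_trans hδ0.le (hδle γ hγ hγ0))
      have h2 : ‖γ • P^[n] x‖ - ‖v‖ ≤ ‖γ • P^[n] x - v‖ := norm_sub_norm_le _ _
      rw [hv] at h2
      linarith
  exact ⟨part1, part2, fun hΓ hδ ⟨x, hd⟩ => part1 x hΓ hd (part2 x hδ hd)⟩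
end
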